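/- If G is a finite group and H is an elementary abelian 2-group, then β(G × H) = β(G) · β(H) = β(G), where β(K) = i(K)/c(K). -/

import Mathlib

noncomputable def numInv (G : Type*) [Group G] : ℕ := Nat.card {x : G // x ^ 2 = 1}

noncomputable def numCyc (G : Type*) [Group G] : ℕ := Nat.card {H : Subgroup G // IsCyclic H}

noncomputable def beta (G : Type*) [Group G] : ℚ := (numInv G : ℚ) / (numCyc G : ℚ)

/-! A cyclic subgroup of `G × H` is `zpowers (g, h)`. When every element of `H` squares to `1`,
it determines the pair `(zpowers g, h)` and is determined by it, since any generator of
`zpowers g` is an odd power of `g`. Hence `c(G × H) = c(G) · |H|`, and likewise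
`i(G × H) = i(G) · i(H) = i(G) · |H|`. -/

open Function Subgroup

theorem Nat.card_eq_of_surjective_of_apply_eq_iff {α β γ : Type*} {f : α → β} {g : α → γ}
    (hf : Surjective f) (hg : Surjective g) (hfg : ∀ a b, f a = f b ↔ g a = g b) :
    Nat.card β = Nat.card γ :=
  Nat.card_congr <| (Setoid.quotientKerEquivOfSurjective f hf).symm.trans <|
    (Quotient.congr (Equiv.refl α) (hfg · ·)).trans (Setoid.quotientKerEquivOfSurjective g hg)

section

variable {G H : Type*} [Group G] [Group H]

theorem exists_odd_zpow_eq_of_zpowers_eq {g g' : G} (h : zpowers g = zpowers g') :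
    ∃ k : ℤ, Odd k ∧ g ^ k = g' := by
  by_cases hg : IsOfFinOrder g
  · obtain ⟨k, rfl⟩ : g' ∈ Submonoid.powers g :=
      hg.mem_powers_iff_mem_zpowers.2 (h ▸ mem_zpowers g')
    have hcop : (orderOf g).Coprime k := by
      have hord : orderOf (g ^ k) = orderOf g := by
        rw [← Nat.card_zpowers, ← h, Nat.card_zpowers]
      rw [hg.orderOf_pow, Nat.div_eq_self] at hord
      exact hord.resolve_left hg.orderOf_pos.ne'
    rcases Nat.even_or_odd k with hk | hk
    · -- an even exponent is coprime only to an odd order, and then `k + orderOf g` is odd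
      have hodd : Odd (orderOf g) := Nat.coprime_two_right.1 (hcop.coprime_dvd_right hk.two_dvd)
      refine ⟨(k + orderOf g : ℕ), by exact_mod_cast hk.add_odd hodd, ?_⟩
      rw [zpow_natCast, pow_add, pow_orderOf_eq_one, mul_one]
    · exact ⟨k, by exact_mod_cast hk, zpow_natCast g k⟩
  · rcases (zpowers_eq_zpowers_iff hg).1 h with rfl | rfl
    · exact ⟨1, odd_one, zpow_one g⟩
    · exact ⟨-1, by decide, zpow_neg_one g⟩

theorem zpow_eq_self_of_sq_eq_one {h : H} (hh : h ^ 2 = 1) {k : ℤ} (hk : Odd k) : h ^ k = h := by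
  obtain ⟨m, rfl⟩ := hk
  rw [zpow_add_one, zpow_mul, zpow_ofNat, hh, one_zpow, one_mul]

theorem eq_of_zpowers_eq_of_sq_eq_one {h h' : H} (hh : h ^ 2 = 1) (e : zpowers h = zpowers h') :
    h = h' := by
  obtain ⟨k, hk, rfl⟩ := exists_odd_zpow_eq_of_zpowers_eq e
  exact (zpow_eq_self_of_sq_eq_one hh hk).symm

theorem zpowers_prod_eq_of_zpowers_eq {g g' : G} {h : H} (hh : h ^ 2 = 1)
    (e : zpowers g = zpowers g') : zpowers (g, h) = zpowers (g', h) := by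
  have mem : ∀ {a b : G}, zpowers a = zpowers b → (b, h) ∈ zpowers (a, h) := fun e => by
    obtain ⟨k, hk, rfl⟩ := exists_odd_zpow_eq_of_zpowers_eq e
    exact ⟨k, by simp [zpow_eq_self_of_sq_eq_one hh hk]⟩
  exact le_antisymm (zpowers_le.2 (mem e.symm)) (zpowers_le.2 (mem e))

theorem zpowers_prod_eq_iff (hH : ∀ x : H, x ^ 2 = 1) {g g' : G} {h h' : H} :
    zpowers (g, h) = zpowers (g', h') ↔ zpowers g = zpowers g' ∧ h = h' := by
  refine ⟨fun e => ⟨?_, eq_of_zpowers_eq_of_sq_eq_one (hH h) ?_⟩,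
    fun ⟨e, hh⟩ => hh ▸ zpowers_prod_eq_of_zpowers_eq (hH h) e⟩
  · simpa only [MonoidHom.map_zpowers, MonoidHom.coe_fst] using
      congrArg (map (MonoidHom.fst G H)) e
  · simpa only [MonoidHom.map_zpowers, MonoidHom.coe_snd] using
      congrArg (map (MonoidHom.snd G H)) e

variable (G) in
def zpowersCyclic (g : G) : {C : Subgroup G // IsCyclic C} := ⟨zpowers g, inferInstance⟩

theorem zpowersCyclic_surjective : Surjective (zpowersCyclic G) := by
  rintro ⟨C, hC⟩
  obtain ⟨g, rfl⟩ := C.isCyclic_iff_exists_zpowers_eq_top.1 hC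
  exact ⟨g, rfl⟩

theorem numInv_prod : numInv (G × H) = numInv G * numInv H := by
  rw [numInv, numInv, numInv, ← Nat.card_prod]
  exact Nat.card_congr <| (Equiv.subtypeEquivRight fun x : G × H => Prod.ext_iff).trans
    (Equiv.subtypeProdEquivProd (p := fun g : G => g ^ 2 = 1) (q := fun h : H => h ^ 2 = 1))

theorem numInv_eq_card_of_sq_eq_one (hH : ∀ x : H, x ^ 2 = 1) : numInv H = Nat.card H :=
  Nat.card_congr (Equiv.subtypeUnivEquiv hH)

theorem numCyc_eq_card_of_sq_eq_one (hH : ∀ x : H, x ^ 2 = 1) : numCyc H = Nat.card H :=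
  (Nat.card_eq_of_bijective _ ⟨fun _ _ e => eq_of_zpowers_eq_of_sq_eq_one (hH _)
    (congrArg Subtype.val e), zpowersCyclic_surjective⟩).symm

theorem numCyc_prod_of_sq_eq_one (hH : ∀ x : H, x ^ 2 = 1) :
    numCyc (G × H) = numCyc G * Nat.card H := by
  rw [numCyc, numCyc, ← Nat.card_prod]
  refine (Nat.card_eq_of_surjective_of_apply_eq_iff
    (zpowersCyclic_surjective.prodMap surjective_id) zpowersCyclic_surjective
    fun x y => ?_).symm
  simp only [Prod.map, zpowersCyclic, Prod.ext_iff, Subtype.ext_iff, id, zpowers_prod_eq_iff hH]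

theorem beta_eq_one_of_sq_eq_one [Finite H] (hH : ∀ x : H, x ^ 2 = 1) : beta H = 1 := by
  rw [beta, numInv_eq_card_of_sq_eq_one hH, numCyc_eq_card_of_sq_eq_one hH,
    div_self (by exact_mod_cast Nat.card_pos.ne')]

theorem beta_prod_of_sq_eq_one [Finite H] (hH : ∀ x : H, x ^ 2 = 1) : beta (G × H) = beta G := by
  rw [beta, beta, numInv_prod, numInv_eq_card_of_sq_eq_one hH, numCyc_prod_of_sq_eq_one hH,
    Nat.cast_mul, Nat.cast_mul, mul_div_mul_right _ _ (by exact_mod_cast Nat.card_pos.ne')]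

end

theorem stmt_13_general (G H : Type*) [Group G] [Group H] [Finite H]
    (hH : ∀ x : H, x ^ 2 = 1) :
    beta (G × H) = beta G * beta H ∧ beta (G × H) = beta G :=
  ⟨by rw [beta_eq_one_of_sq_eq_one hH, mul_one, beta_prod_of_sq_eq_one hH],
    beta_prod_of_sq_eq_one hH⟩

theorem stmt_13 (G H : Type*) [Group G] [Group H] [Finite G] [Finite H]
    (hH : ∀ x : H, x ^ 2 = 1) :
    beta (G × H) = beta G * beta H ∧ beta (G × H) = beta G :=
  stmt_13_general G H hH
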